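/- arXiv:2410.13728 — 2 statements merged into one kernel-verified Lean document; each statement's English description precedes it below -/
import Mathlib

section
/- Let A be a Deligne-finite k-linear abelian category over an algebraically closed field k, with a fixed ordering S_1,…,S_n of its simple objects, and suppose [Δ_j : S_j] = 1 for each j = 1,…,n. Then for each i the length of the projective cover P_i satisfies length(P_i) ≤ Σ_{j=1}^{n} [∇_j : S_i] · length(Δ_j), and equality holds for all i if and only if [P_i] = Σ_{j=i}^{n} [∇_j : S_i] · [Δ_j] in K(A) for all i; in the case of equality each P_i admits a filtration whose factors are direct sums of the standard objects Δ_i,…,Δ_n. -/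
open CategoryTheory CategoryTheory.Limits

universe v u

namespace HWPaper

variable {C : Type u} [Category.{v} C]

/-- `p : P ⟶ X` exhibits `P` as a projective cover of `X`:
`P` is projective, `p` is epi, and `p` is a superfluous epimorphism. -/
def IsProjCover (P X : C) (p : P ⟶ X) : Prop :=
  Projective P ∧ Epi p ∧ ∀ ⦃Y : C⦄ (f : Y ⟶ P), Epi (f ≫ p) → Epi f

/-- `ι : X ⟶ I` exhibits `I` as an injective hull of `X`. -/
def IsInjHull (X I : C) (ι : X ⟶ I) : Prop :=
  Injective I ∧ Mono ι ∧ ∀ ⦃Y : C⦄ (f : I ⟶ Y), Mono (ι ≫ f) → Mono f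

/-- `q : P ⟶ D` exhibits `D` as the maximal quotient of `P` lying in the class `mem`:
every quotient of `P` lying in `mem` factors through `q`. -/
def IsMaxQuotientIn (mem : C → Prop) (P D : C) (q : P ⟶ D) : Prop :=
  Epi q ∧ mem D ∧ ∀ ⦃Q : C⦄ (e : P ⟶ Q), Epi e → mem Q → ∃ r : D ⟶ Q, q ≫ r = e

/-- `m : N ⟶ I` exhibits `N` as the maximal subobject of `I` lying in the class `mem`. -/
def IsMaxSubobjectIn (mem : C → Prop) (I N : C) (m : N ⟶ I) : Prop :=
  Mono m ∧ mem N ∧ ∀ ⦃M : C⦄ (s : M ⟶ I), Mono s → mem M → ∃ r : M ⟶ N, r ≫ m = s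

/-- The extension closure of a class of objects in an abelian category. -/
inductive ExtClosure [Abelian C] (P : C → Prop) : C → Prop
  | of (X : C) : P X → ExtClosure P X
  | zero (X : C) : IsZero X → ExtClosure P X
  | ext (S : ShortComplex C) : S.ShortExact → ExtClosure P S.X₁ → ExtClosure P S.X₃ →
      ExtClosure P S.X₂

variable (C) in
/-- The subgroup of relations coming from short exact sequences. -/
def K0Relations [Abelian C] : AddSubgroup (FreeAbelianGroup C) :=
  AddSubgroup.closure {x | ∃ S : ShortComplex C, S.ShortExact ∧
    x = FreeAbelianGroup.of S.X₂ - FreeAbelianGroup.of S.X₁ - FreeAbelianGroup.of S.X₃}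

variable (C) in
/-- The Grothendieck group of an abelian category. -/
def K0 [Abelian C] : Type u := FreeAbelianGroup C ⧸ K0Relations C

noncomputable instance [Abelian C] : AddCommGroup (K0 C) :=
  QuotientAddGroup.Quotient.addCommGroup _

/-- The class of an object in the Grothendieck group. -/
def K0.cls [Abelian C] (X : C) : K0 C := QuotientAddGroup.mk (FreeAbelianGroup.of X)

/-- The data of a Deligne-finite `k`-linear abelian category with an ordering
`S 0, …, S (n-1)` of its simple objects, together with projective covers, injective hulls,
standard and costandard objects, and the Jordan–Hölder multiplicity function. -/
structure DeligneData (k : Type v) [Field k] [IsAlgClosed k]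
    (C : Type u) [Category.{v} C] [Abelian C] [Linear k C] [EnoughProjectives C]
    (n : ℕ) where
  /-- the simple objects -/
  S : Fin n → C
  /-- the projective covers -/
  P : Fin n → C
  /-- the injective hulls -/
  I : Fin n → C
  /-- the standard objects -/
  Δ : Fin n → C
  /-- the costandard objects -/
  nabla : Fin n → C
  /-- the projective cover maps -/
  p : ∀ i, P i ⟶ S i
  /-- the injective hull maps -/
  ι : ∀ i, S i ⟶ I i
  /-- the quotient maps onto the standard objects -/
  q : ∀ i, P i ⟶ Δ i
  /-- the inclusions of the costandard objects -/
  m : ∀ i, nabla i ⟶ I i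
  /-- the Jordan–Hölder multiplicity `[X : S j]` -/
  mult : C → Fin n → ℕ
  homFinite : ∀ X Y : C, FiniteDimensional k (X ⟶ Y)
  ext1Finite : ∀ X Y : C, FiniteDimensional k (((Ext k C 1).obj (Opposite.op X)).obj Y)
  simple : ∀ i, Simple (S i)
  distinct : ∀ i j, Nonempty (S i ≅ S j) → i = j
  exhaustive : ∀ X : C, Simple X → ∃ i, Nonempty (X ≅ S i)
  projCover : ∀ i, IsProjCover (P i) (S i) (p i)
  injHull : ∀ i, IsInjHull (S i) (I i) (ι i)
  std : ∀ i, IsMaxQuotientIn (ExtClosure (fun X => ∃ j, j ≤ i ∧ Nonempty (X ≅ S j)))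
      (P i) (Δ i) (q i)
  costd : ∀ i, IsMaxSubobjectIn (ExtClosure (fun X => ∃ j, j ≤ i ∧ Nonempty (X ≅ S j)))
      (I i) (nabla i) (m i)
  mult_simple : ∀ i j, mult (S i) j = if i = j then 1 else 0
  mult_additive : ∀ T : ShortComplex C, T.ShortExact →
      ∀ j, mult T.X₂ j = mult T.X₁ j + mult T.X₃ j
  mult_eq_zero_iff : ∀ X : C, (∀ j, mult X j = 0) ↔ IsZero X

variable {k : Type v} [Field k] [IsAlgClosed k] [Abelian C] [Linear k C]
  [EnoughProjectives C] {n : ℕ}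

/-- The Serre subcategory `A_i`, i.e. the extension closure of `S 0, …, S i`. -/
def DeligneData.serre (D : DeligneData k C n) (i : Fin n) : C → Prop :=
  ExtClosure (fun X => ∃ j, j ≤ i ∧ Nonempty (X ≅ D.S j))

/-- `A` is a highest-weight category with respect to the given ordering of its simple
objects: `End (Δ i) ≅ k` and each `P i` lies in the extension closure of `Δ i, …, Δ (n-1)`. -/
def DeligneData.IsHighestWeight (D : DeligneData k C n) : Prop :=
  ∀ i, Nonempty (End (D.Δ i) ≃ₐ[k] k) ∧
    ExtClosure (fun X => ∃ j, i ≤ j ∧ Nonempty (X ≅ D.Δ j)) (D.P i)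


attribute [local instance] CategoryTheory.Abelian.hasFiniteBiproducts

/-- The length of an object: the total number of simple factors in a Jordan–Hölder
filtration. -/
def DeligneData.length (D : DeligneData k C n) (X : C) : ℕ := ∑ j, D.mult X j

/-!
Filter `P i` by the kernels of `P i ↠ Q c`, where `Q c` is its largest quotient with composition
factors among `S 0, …, S (c-1)`. The layer `L_c = ker (Q (c+1) ↠ Q c)` lies in `A_c` and has no
nonzero quotient in `A_{c-1}`, so its head is `S c ^ d_c` with `d_c = dim Hom (L_c, S c)`. Each
summand of the head is reached by a map `Δ c ⟶ L_c`, and peeling off the images of such maps gives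
`[L_c : S l] ≤ d_c · [Δ c : S l]`. Since `L_c` embeds in `Q (c+1) ∈ A_c`, a quotient of `P i`,
relative injectivity of `∇ c` gives `d_c ≤ dim Hom (P i, ∇ c) = [∇ c : S i]`; summing over `c`
gives the bound. In the case of equality every map `Δ c ⟶ L_c` peeled off is injective, and as
`Δ c` is projective relative to `A_c`, `L_c ≅ Δ c ^ d_c`. Finally `[- : S l]` is additive, so it
factors through `K(A)`, where the classes `[S l]` generate; hence the identity in `K(A)` is
equivalent to equality of all multiplicities.
-/

section General

variable {𝒜 : Type*} [Category* 𝒜] [Abelian 𝒜]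

lemma shortExact_cokernel {X Y : 𝒜} (f : X ⟶ Y) [Mono f] :
    (ShortComplex.mk f (cokernel.π f) (cokernel.condition f)).ShortExact :=
  .mk' (ShortComplex.exact_of_g_is_cokernel _ (cokernelIsCokernel f)) ‹_› inferInstance

lemma shortExact_kernel {X Y : 𝒜} (f : X ⟶ Y) [Epi f] :
    (ShortComplex.mk (kernel.ι f) f (kernel.condition f)).ShortExact :=
  .mk' (ShortComplex.exact_of_f_is_kernel _ (kernelIsKernel f)) inferInstance ‹_›

lemma shortExact_kernel_comp {X Y Z : 𝒜} (f : X ⟶ Y) (g : Y ⟶ Z) [Epi f] :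
    (ShortComplex.mk (kernel.map f (f ≫ g) (𝟙 _) g (by simp))
      (kernel.map (f ≫ g) g f (𝟙 _) (by simp)) (by ext; simp)).ShortExact := by
  have hS := kernelCokernelCompSequence_exact f g
  refine .mk' (hS.exact 0) inferInstance ((hS.exact 1).epi_f ?_)
  show kernelCokernelCompSequence.δ f g = 0
  rw [kernelCokernelCompSequence.δ_fac]
  simp [cokernel.π_of_epi]

lemma exists_mono_of_not_simple {X : 𝒜} (h0 : ¬ IsZero X) (hs : ¬ Simple X) :
    ∃ (Y : 𝒜) (f : Y ⟶ X), Mono f ∧ ¬ IsZero Y ∧ ¬ IsZero (cokernel f) := by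
  by_contra! h
  refine hs ⟨fun {Y} f _ => ⟨fun _ hf => h0 ?_, fun hf => ?_⟩⟩
  · exact IsZero.of_epi_eq_zero f hf
  · have hY : ¬ IsZero Y := fun hY => hf (hY.eq_of_src _ _)
    have : Epi f := Abelian.epi_of_cokernel_π_eq_zero _ ((h Y f ‹_› hY).eq_of_tgt _ _)
    exact isIso_of_mono_of_epi f

lemma isZero_biproduct_fin_zero (f : Fin 0 → 𝒜) : IsZero (⨁ f) :=
  (IsZero.iff_id_eq_zero _).2 (biproduct.hom_ext _ _ fun j => j.elim0)

noncomputable def biprodBiproductFinSuccIso (X : 𝒜) (T : ℕ) :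
    X ⊞ (⨁ fun _ : Fin T => X) ≅ ⨁ fun _ : Fin (T + 1) => X where
  hom := biprod.desc (biproduct.ι (fun _ : Fin (T + 1) => X) 0)
    (biproduct.desc fun a => biproduct.ι (fun _ : Fin (T + 1) => X) a.succ)
  inv := biproduct.desc
    (Fin.cases biprod.inl fun a => biproduct.ι (fun _ : Fin T => X) a ≫ biprod.inr)
  hom_inv_id := biprod.hom_ext' _ _ (by simp) (biproduct.hom_ext' _ _ fun a => by simp)
  inv_hom_id := biproduct.hom_ext' _ _ fun b => by
    induction b using Fin.cases <;> simp

lemma exists_filtration_of_chain {K : ℕ → 𝒜} (u : ∀ c, K (c + 1) ⟶ K c) (hu : ∀ c, Mono (u c))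
    (N : ℕ) :
    ∃ (F : Fin (N + 1) → 𝒜) (f : ∀ l : Fin N, F l.castSucc ⟶ F l.succ),
      F 0 = K N ∧ F (Fin.last N) = K 0 ∧
      ∀ l : Fin N, Mono (f l) ∧ ∃ c : Fin N, Nonempty (cokernel (f l) ≅ cokernel (u c)) := by
  refine ⟨fun a => K (N - a), fun l => eqToHom (congrArg K ?_) ≫ u (N - (l + 1)), rfl, by simp,
    fun l => ⟨?_, ⟨N - (l + 1), by omega⟩, ⟨cokernelEpiComp _ _⟩⟩⟩
  · simp only [Fin.val_castSucc]
    omega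
  · have := hu (N - (l + 1))
    exact mono_comp _ _

lemma K0.cls_add_of_shortExact {S : ShortComplex 𝒜} (hS : S.ShortExact) :
    K0.cls S.X₂ = K0.cls S.X₁ + K0.cls S.X₃ := by
  rw [← sub_eq_zero, sub_add_eq_sub_sub]
  exact (QuotientAddGroup.eq_zero_iff _).2 (AddSubgroup.subset_closure ⟨S, hS, rfl⟩)

lemma K0.cls_eq_zero_of_isZero {X : 𝒜} (h : IsZero X) : K0.cls X = 0 :=
  left_eq_add.1 (K0.cls_add_of_shortExact (S := .mk (𝟙 X) (𝟙 X) (h.eq_of_src _ _))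
    (.mk' (ShortComplex.exact_of_isZero_X₂ _ h) inferInstance inferInstance))

lemma K0.cls_eq_of_iso {X Y : 𝒜} (e : X ≅ Y) : K0.cls X = K0.cls Y := by
  rw [K0.cls_add_of_shortExact (shortExact_cokernel e.hom),
    K0.cls_eq_zero_of_isZero (isZero_cokernel_of_epi e.hom), add_zero]

variable (K : Type*) [Field K] [Linear K 𝒜]

open Module

lemma finrank_hom_le_of_mono {X Y Y' : 𝒜} (g : Y ⟶ Y') [Mono g]
    [FiniteDimensional K (X ⟶ Y')] : finrank K (X ⟶ Y) ≤ finrank K (X ⟶ Y') :=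
  LinearMap.finrank_le_finrank_of_injective (f := Linear.rightComp K X g)
    fun _ _ h => (cancel_mono g).1 h

lemma finrank_hom_le_of_epi {X X' Y : 𝒜} (f : X ⟶ X') [Epi f]
    [FiniteDimensional K (X ⟶ Y)] : finrank K (X' ⟶ Y) ≤ finrank K (X ⟶ Y) :=
  LinearMap.finrank_le_finrank_of_injective (f := Linear.leftComp K Y f)
    fun _ _ h => (cancel_epi f).1 h

lemma finrank_hom_le_of_forall_exists_comp_eq {X Y Z : 𝒜} (κ : X ⟶ Y)
    (hκ : ∀ f : X ⟶ Z, ∃ g, κ ≫ g = f) [FiniteDimensional K (Y ⟶ Z)] :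
    finrank K (X ⟶ Z) ≤ finrank K (Y ⟶ Z) :=
  LinearMap.finrank_le_finrank_of_surjective (f := Linear.leftComp K Z κ) hκ

lemma finrank_hom_lt_of_epi {X X' Y : 𝒜} (f : X ⟶ X') [Epi f] [FiniteDimensional K (X ⟶ Y)]
    (g : X ⟶ Y) (hg : ∀ h, f ≫ h ≠ g) : finrank K (X' ⟶ Y) < finrank K (X ⟶ Y) := by
  have hinj : Function.Injective (Linear.leftComp K Y f) := fun _ _ h => (cancel_epi f).1 h
  rw [(LinearEquiv.ofInjective _ hinj).finrank_eq]
  exact Submodule.finrank_lt fun htop => by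
    obtain ⟨h, hh⟩ : g ∈ LinearMap.range (Linear.leftComp K Y f) := htop ▸ Submodule.mem_top
    exact hg h hh

lemma finrank_hom_cokernel_lt {Z L Y : 𝒜} {a : Z ⟶ L} {π : L ⟶ Y} [FiniteDimensional K (L ⟶ Y)]
    (ha : a ≫ π ≠ 0) : finrank K (cokernel a ⟶ Y) < finrank K (L ⟶ Y) :=
  finrank_hom_lt_of_epi K (cokernel.π a) π fun h hh =>
    ha (by rw [← hh, cokernel.condition_assoc, zero_comp])

lemma finrank_hom_projective_eq_add (P : 𝒜) [Projective P] {S : ShortComplex 𝒜}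
    (hS : S.ShortExact) [FiniteDimensional K (P ⟶ S.X₂)] :
    finrank K (P ⟶ S.X₂) = finrank K (P ⟶ S.X₁) + finrank K (P ⟶ S.X₃) := by
  have := hS.mono_f
  have := hS.epi_g
  have hsurj : Function.Surjective (Linear.rightComp K P S.g) :=
    fun u => ⟨Projective.factorThru u S.g, Projective.factorThru_comp u S.g⟩
  have hinj : Function.Injective (Linear.rightComp K P S.f) := fun _ _ h => (cancel_mono S.f).1 h
  have hker : LinearMap.ker (Linear.rightComp K P S.g) =
      LinearMap.range (Linear.rightComp K P S.f) := by
    ext u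
    refine ⟨fun hu => ⟨hS.exact.lift u hu, hS.exact.lift_f u hu⟩, ?_⟩
    rintro ⟨v, rfl⟩
    simp [Linear.rightComp]
  have h := LinearMap.finrank_range_add_finrank_ker (Linear.rightComp K P S.g)
  rw [LinearMap.range_eq_top.2 hsurj, finrank_top, hker,
    ← (LinearEquiv.ofInjective _ hinj).finrank_eq] at h
  omega

end General

namespace DeligneData

variable (D : DeligneData k C n)

open Module

/-- The numerical form of `A_{c-1}`; see `mem_serre_iff`. -/
def FactorsBelow (c : ℕ) (X : C) : Prop :=
  ∀ l : Fin n, c ≤ (l : ℕ) → D.mult X l = 0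

lemma mult_eq_zero_of_isZero {X : C} (h : IsZero X) (l : Fin n) : D.mult X l = 0 :=
  (D.mult_eq_zero_iff X).2 h l

lemma mult_add_of_mono {X Y : C} (f : X ⟶ Y) [Mono f] (l : Fin n) :
    D.mult X l + D.mult (cokernel f) l = D.mult Y l :=
  (D.mult_additive _ (shortExact_cokernel f) l).symm

lemma mult_add_of_epi {X Y : C} (f : X ⟶ Y) [Epi f] (l : Fin n) :
    D.mult (kernel f) l + D.mult Y l = D.mult X l :=
  (D.mult_additive _ (shortExact_kernel f) l).symm

lemma mult_le_of_mono {X Y : C} (f : X ⟶ Y) [Mono f] (l : Fin n) :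
    D.mult X l ≤ D.mult Y l :=
  (D.mult_add_of_mono f l).symm ▸ Nat.le_add_right _ _

lemma mult_le_of_epi {X Y : C} (f : X ⟶ Y) [Epi f] (l : Fin n) :
    D.mult Y l ≤ D.mult X l :=
  (D.mult_add_of_epi f l).symm ▸ Nat.le_add_left _ _

lemma mult_eq_of_iso {X Y : C} (e : X ≅ Y) (l : Fin n) : D.mult X l = D.mult Y l :=
  (D.mult_le_of_mono e.hom l).antisymm (D.mult_le_of_epi e.hom l)

lemma mult_biprod (X Y : C) (l : Fin n) : D.mult (X ⊞ Y) l = D.mult X l + D.mult Y l :=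
  D.mult_additive _ (ShortComplex.Splitting.ofHasBinaryBiproduct X Y).shortExact l

lemma mult_le_add_cokernel {X Y : C} (f : X ⟶ Y) (l : Fin n) :
    D.mult Y l ≤ D.mult X l + D.mult (cokernel f) l := by
  rw [← D.mult_add_of_mono (image.ι f), D.mult_eq_of_iso (cokernelImageι f)]
  exact Nat.add_le_add_right (D.mult_le_of_epi (factorThruImage f) l) _

lemma length_add_of_mult {X Y Z : C} (h : ∀ l, D.mult X l + D.mult Y l = D.mult Z l) :
    D.length X + D.length Y = D.length Z := by
  simp only [length, ← Finset.sum_add_distrib, h]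

lemma isZero_of_length_eq_zero {X : C} (h : D.length X = 0) : IsZero X :=
  (D.mult_eq_zero_iff X).1 fun l => Finset.sum_eq_zero_iff.1 h l (Finset.mem_univ l)

lemma length_eq_zero_of_isZero {X : C} (h : IsZero X) : D.length X = 0 :=
  Finset.sum_eq_zero fun l _ => D.mult_eq_zero_of_isZero h l

lemma length_pos {X : C} (h : ¬ IsZero X) : 0 < D.length X :=
  Nat.pos_of_ne_zero fun h' => h (D.isZero_of_length_eq_zero h')

lemma length_le_of_epi {X Y : C} (f : X ⟶ Y) [Epi f] : D.length Y ≤ D.length X :=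
  Finset.sum_le_sum fun l _ => D.mult_le_of_epi f l

lemma isIso_of_epi_of_length_le {X Y : C} (f : X ⟶ Y) [Epi f] (h : D.length X ≤ D.length Y) :
    IsIso f := by
  have hk : IsZero (kernel f) := D.isZero_of_length_eq_zero <| by
    have := D.length_add_of_mult (D.mult_add_of_epi f); omega
  have : Mono f := Abelian.mono_of_kernel_ι_eq_zero _ (hk.eq_of_src _ _)
  exact isIso_of_mono_of_epi f

namespace FactorsBelow

variable {D}

lemma of_mono {c : ℕ} {X Y : C} (f : X ⟶ Y) [Mono f] (hY : D.FactorsBelow c Y) :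
    D.FactorsBelow c X := fun l hl =>
  Nat.le_zero.1 (hY l hl ▸ D.mult_le_of_mono f l)

lemma of_epi {c : ℕ} {X Y : C} (f : X ⟶ Y) [Epi f] (hX : D.FactorsBelow c X) :
    D.FactorsBelow c Y := fun l hl =>
  Nat.le_zero.1 (hX l hl ▸ D.mult_le_of_epi f l)

lemma mono {c c' : ℕ} (hcc' : c ≤ c') {X : C} (hX : D.FactorsBelow c X) :
    D.FactorsBelow c' X := fun l hl => hX l (hcc'.trans hl)

lemma biprod {c : ℕ} {X Y : C} (hX : D.FactorsBelow c X) (hY : D.FactorsBelow c Y) :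
    D.FactorsBelow c (X ⊞ Y) := fun l hl => by
  rw [D.mult_biprod, hX l hl, hY l hl]

lemma isZero {X : C} (hX : D.FactorsBelow 0 X) : IsZero X :=
  (D.mult_eq_zero_iff X).1 fun l => hX l (Nat.zero_le _)

end FactorsBelow

lemma factorsBelow_of_le {c : ℕ} (hc : n ≤ c) (X : C) : D.FactorsBelow c X :=
  fun l hl => absurd (hc.trans hl) (not_le.2 l.isLt)

lemma S_not_isZero (i : Fin n) : ¬ IsZero (D.S i) :=
  have := D.simple i
  Simple.not_isZero _

lemma p_ne_zero (i : Fin n) : D.p i ≠ 0 := fun h =>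
  have : Epi (D.p i) := (D.projCover i).2.1
  D.S_not_isZero i (IsZero.of_epi_eq_zero _ h)

lemma mem_extClosure_iff {Φ : Fin n → Prop} {X : C} :
    ExtClosure (fun X => ∃ j, Φ j ∧ Nonempty (X ≅ D.S j)) X ↔ ∀ l, ¬ Φ l → D.mult X l = 0 := by
  constructor
  · intro hX l hl
    induction hX with
    | of X hX =>
      obtain ⟨j, hj, ⟨e⟩⟩ := hX
      rw [D.mult_eq_of_iso e, D.mult_simple, if_neg (by rintro rfl; exact hl hj)]
    | zero X hX => exact D.mult_eq_zero_of_isZero hX l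
    | ext S hS _ _ ih₁ ih₃ => rw [D.mult_additive S hS l, ih₁, ih₃]
  · intro hX
    induction h : D.length X using Nat.strong_induction_on generalizing X with
    | _ N ih =>
      by_cases h0 : IsZero X
      · exact .zero X h0
      by_cases hs : Simple X
      · obtain ⟨j, ⟨e⟩⟩ := D.exhaustive X hs
        refine .of X ⟨j, by_contra fun hj => ?_, ⟨e⟩⟩
        simpa [D.mult_eq_of_iso e, D.mult_simple] using hX j hj
      obtain ⟨Y, f, hf, hY, hcok⟩ := exists_mono_of_not_simple h0 hs
      have hlen := D.length_add_of_mult (D.mult_add_of_mono f)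
      have := D.length_pos hY
      have := D.length_pos hcok
      exact .ext _ (shortExact_cokernel f)
        (ih (D.length Y) (by omega) (X := Y)
          (fun l hl => Nat.le_zero.1 (hX l hl ▸ D.mult_le_of_mono f l)) rfl)
        (ih (D.length (cokernel f)) (by omega) (X := cokernel f)
          (fun l hl => Nat.le_zero.1 (hX l hl ▸ D.mult_le_of_epi (cokernel.π f) l)) rfl)

lemma mem_serre_iff (t : Fin n) {X : C} : D.serre t X ↔ D.FactorsBelow (t + 1) X :=
  D.mem_extClosure_iff.trans
    ⟨fun h l hl => h l (by rw [Fin.le_def]; omega),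
      fun h l hl => h l (by rw [Fin.le_def] at hl; omega)⟩

@[elab_as_elim]
lemma induction_on {p : C → Prop} (X : C) (zero : ∀ X, IsZero X → p X)
    (simple : ∀ i X, Nonempty (X ≅ D.S i) → p X)
    (ext : ∀ S : ShortComplex C, S.ShortExact → p S.X₁ → p S.X₃ → p S.X₂) : p X := by
  have hX : ExtClosure (fun X => ∃ j, True ∧ Nonempty (X ≅ D.S j)) X :=
    D.mem_extClosure_iff.2 fun l hl => absurd trivial hl
  induction hX with
  | of X hX => obtain ⟨j, -, e⟩ := hX; exact simple j X e
  | zero X hX => exact zero X hX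
  | ext S hS _ _ ih₁ ih₃ => exact ext S hS ih₁ ih₃

lemma exists_epi_S {X : C} (hX : ¬ IsZero X) : ∃ (j : Fin n) (π : X ⟶ D.S j), Epi π := by
  induction X using D.induction_on with
  | zero X h => exact absurd h hX
  | simple i X e => exact ⟨i, e.some.hom, inferInstance⟩
  | ext S hS ih₁ ih₃ =>
    have := hS.epi_g
    by_cases h₃ : IsZero S.X₃
    · have := hS.mono_f
      have : Epi S.f := hS.exact.epi_f (h₃.eq_of_tgt _ _)
      have : IsIso S.f := isIso_of_mono_of_epi _
      obtain ⟨j, π, hπ⟩ := ih₁ fun h₁ => hX (h₁.of_iso (asIso S.f).symm)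
      exact ⟨j, inv S.f ≫ π, inferInstance⟩
    · obtain ⟨j, π, hπ⟩ := ih₃ h₃
      exact ⟨j, S.g ≫ π, epi_comp _ _⟩

/-- If `ker f ⟶ P i ⟶ S i` were nonzero it would be epi, and then so would `ker f ⟶ P i` by
superfluity of `p i`; hence `p i` factors through `f`. -/
lemma exists_iso_of_hom_P_ne_zero {i j : Fin n} (f : D.P i ⟶ D.S j) (hf : f ≠ 0) :
    ∃ h : D.S i ≅ D.S j, D.p i ≫ h.hom = f := by
  have := D.simple i
  have := D.simple j
  have hp : Epi (D.p i) := (D.projCover i).2.1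
  have : Epi f := epi_of_nonzero_to_simple hf
  have hker : kernel.ι f ≫ D.p i = 0 := by
    by_contra h
    have : Epi (kernel.ι f ≫ D.p i) := epi_of_nonzero_to_simple h
    have : Epi (kernel.ι f) := (D.projCover i).2.2 _ this
    exact hf ((cancel_epi (kernel.ι f)).1 (by simp))
  have hg : f ≫ Abelian.epiDesc f (D.p i) hker = D.p i := Abelian.comp_epiDesc _ _ _
  have : Epi (Abelian.epiDesc f (D.p i) hker) := by
    rw [← hg] at hp
    exact epi_of_epi f _
  have : IsIso (Abelian.epiDesc f (D.p i) hker) := isIso_of_epi_of_nonzero fun h0 =>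
    D.p_ne_zero i (by rw [← hg, h0, comp_zero])
  exact ⟨(asIso (Abelian.epiDesc f (D.p i) hker)).symm, by simp [IsIso.comp_inv_eq, hg]⟩

lemma eq_of_hom_P_ne_zero {i j : Fin n} (f : D.P i ⟶ D.S j) (hf : f ≠ 0) : j = i :=
  D.distinct j i ⟨(D.exists_iso_of_hom_P_ne_zero f hf).choose.symm⟩

lemma finrank_hom_P_S (i j : Fin n) : finrank k (D.P i ⟶ D.S j) = if j = i then 1 else 0 := by
  split_ifs with h
  · subst h
    have := D.simple j
    have := D.homFinite (D.S j) (D.S j)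
    have hp : Epi (D.p j) := (D.projCover j).2.1
    have hbij : Function.Bijective (Linear.leftComp k (D.S j) (D.p j)) := by
      refine ⟨fun _ _ h => (cancel_epi (D.p j)).1 h, fun f => ?_⟩
      by_cases hf : f = 0
      · exact ⟨0, by simp [hf]⟩
      · obtain ⟨h, hh⟩ := D.exists_iso_of_hom_P_ne_zero f hf
        exact ⟨h.hom, hh⟩
    rw [← (LinearEquiv.ofBijective _ hbij).finrank_eq]
    exact finrank_endomorphism_simple_eq_one k (D.S j)
  · have : Subsingleton (D.P i ⟶ D.S j) := ⟨fun a b => by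
      have hz : ∀ f : D.P i ⟶ D.S j, f = 0 := fun f =>
        by_contra fun hf => h (D.eq_of_hom_P_ne_zero f hf)
      rw [hz a, hz b]⟩
    exact finrank_zero_of_subsingleton

lemma finrank_hom_P_eq_mult (i : Fin n) (X : C) : finrank k (D.P i ⟶ X) = D.mult X i := by
  have : Projective (D.P i) := (D.projCover i).1
  induction X using D.induction_on with
  | zero X h =>
    have : Subsingleton (D.P i ⟶ X) := ⟨fun a b => h.eq_of_tgt a b⟩
    rw [finrank_zero_of_subsingleton, D.mult_eq_zero_of_isZero h]
  | simple j X e =>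
    rw [← (Linear.homCongr k (Iso.refl _) e.some.symm).finrank_eq, D.finrank_hom_P_S,
      D.mult_eq_of_iso e.some, D.mult_simple]
  | ext S hS ih₁ ih₃ =>
    have := D.homFinite (D.P i) S.X₂
    rw [finrank_hom_projective_eq_add k _ hS, D.mult_additive S hS, ih₁, ih₃]

lemma factorsBelow_S (t : Fin n) : D.FactorsBelow (t + 1) (D.S t) :=
  (D.mem_serre_iff t).1 (.of _ ⟨t, le_rfl, ⟨Iso.refl _⟩⟩)

lemma factorsBelow_nabla (t : Fin n) : D.FactorsBelow (t + 1) (D.nabla t) :=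
  (D.mem_serre_iff t).1 (D.costd t).2.1

lemma mult_nabla_eq_zero {i j : Fin n} (h : j < i) : D.mult (D.nabla j) i = 0 :=
  D.factorsBelow_nabla j i h

lemma exists_q_comp_eq {t : Fin n} {Y : C} (φ : D.P t ⟶ Y) (hY : D.FactorsBelow (t + 1) Y) :
    ∃ b : D.Δ t ⟶ Y, D.q t ≫ b = φ := by
  obtain ⟨r, hr⟩ := (D.std t).2.2 (factorThruImage φ) inferInstance
    ((D.mem_serre_iff t).2 (hY.of_mono (image.ι φ)))
  exact ⟨r ≫ image.ι φ, by rw [← Category.assoc, hr, image.fac]⟩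

lemma Δ_not_isZero (t : Fin n) : ¬ IsZero (D.Δ t) := fun h => by
  obtain ⟨b, hb⟩ := D.exists_q_comp_eq (D.p t) (D.factorsBelow_S t)
  exact D.p_ne_zero t (by rw [← hb, h.eq_of_src b 0, comp_zero])

/-- `Δ t` is projective relative to `A_t`. -/
lemma exists_lift_Δ {t : Fin n} {X Y : C} (π : Y ⟶ X) [Epi π] (hY : D.FactorsBelow (t + 1) Y)
    (a : D.Δ t ⟶ X) : ∃ b : D.Δ t ⟶ Y, b ≫ π = a := by
  have : Projective (D.P t) := (D.projCover t).1
  have : Epi (D.q t) := (D.std t).1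
  obtain ⟨b, hb⟩ := D.exists_q_comp_eq (Projective.factorThru (D.q t ≫ a) π) hY
  exact ⟨b, (cancel_epi (D.q t)).1 (by rw [← Category.assoc, hb, Projective.factorThru_comp])⟩

/-- `∇ t` is injective relative to `A_t`. -/
lemma exists_extend_nabla {t : Fin n} {X Y : C} (κ : X ⟶ Y) [Mono κ]
    (hY : D.FactorsBelow (t + 1) Y) (f : X ⟶ D.nabla t) : ∃ g : Y ⟶ D.nabla t, κ ≫ g = f := by
  have : Injective (D.I t) := (D.injHull t).1
  have : Mono (D.m t) := (D.costd t).1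
  obtain ⟨s, hs⟩ := (D.costd t).2.2 (image.ι (Injective.factorThru (f ≫ D.m t) κ)) inferInstance
    ((D.mem_serre_iff t).2 (hY.of_epi (factorThruImage _)))
  refine ⟨factorThruImage _ ≫ s, (cancel_mono (D.m t)).1 ?_⟩
  simp [hs]

lemma exists_mono_S_nabla (t : Fin n) : ∃ s : D.S t ⟶ D.nabla t, Mono s := by
  have : Mono (D.ι t) := (D.injHull t).2.1
  obtain ⟨s, hs⟩ := (D.costd t).2.2 (D.ι t) inferInstance (.of _ ⟨t, le_rfl, ⟨Iso.refl _⟩⟩)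
  have : Mono (s ≫ D.m t) := hs ▸ inferInstance
  exact ⟨s, mono_of_mono s (D.m t)⟩

/-- The head of `L` is a sum of copies of `S t`. -/
def IsLayer (t : Fin n) (L : C) : Prop :=
  D.FactorsBelow (t + 1) L ∧ ∀ ⦃W : C⦄ (ρ : L ⟶ W), Epi ρ → D.FactorsBelow t W → IsZero W

section Layer

variable {D}

lemma IsLayer.of_epi {t : Fin n} {L L' : C} (hL : D.IsLayer t L) (π : L ⟶ L') [Epi π] :
    D.IsLayer t L' :=
  ⟨hL.1.of_epi π, fun _ ρ _ hW => hL.2 (π ≫ ρ) (epi_comp _ _) hW⟩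

lemma IsLayer.exists_Δ_comp_ne_zero {t : Fin n} {L : C} (hL : D.IsLayer t L) (h0 : ¬ IsZero L) :
    ∃ (a : D.Δ t ⟶ L) (π : L ⟶ D.S t), a ≫ π ≠ 0 := by
  obtain ⟨j, π, hπ⟩ := D.exists_epi_S h0
  have hjt : j = t := by
    have hj : (j : ℕ) < t + 1 := by
      by_contra h
      simpa [D.mult_simple] using (hL.1.of_epi π) j (by omega)
    by_contra hne
    have hne' : (j : ℕ) ≠ t := fun h => hne (Fin.ext h)
    refine D.S_not_isZero j (hL.2 π hπ fun l hl => ?_)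
    rw [D.mult_simple, if_neg]
    rintro rfl
    omega
  subst hjt
  have : Projective (D.P j) := (D.projCover j).1
  obtain ⟨a, ha⟩ := D.exists_q_comp_eq (Projective.factorThru (D.p j) π) hL.1
  refine ⟨a, π, fun h => D.p_ne_zero j ?_⟩
  rw [← Projective.factorThru_comp (D.p j) π, ← ha, Category.assoc, h, comp_zero]

lemma IsLayer.mult_le {t : Fin n} {L : C} (hL : D.IsLayer t L) (l : Fin n) :
    D.mult L l ≤ finrank k (L ⟶ D.S t) * D.mult (D.Δ t) l := by
  induction h : finrank k (L ⟶ D.S t) using Nat.strong_induction_on generalizing L with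
  | _ N ih =>
    by_cases h0 : IsZero L
    · rw [D.mult_eq_zero_of_isZero h0]
      exact Nat.zero_le _
    obtain ⟨a, π, ha⟩ := hL.exists_Δ_comp_ne_zero h0
    have := D.homFinite L (D.S t)
    have hlt := h ▸ finrank_hom_cokernel_lt k ha
    calc D.mult L l ≤ D.mult (D.Δ t) l + D.mult (cokernel a) l := D.mult_le_add_cokernel a l
      _ ≤ D.mult (D.Δ t) l + finrank k (cokernel a ⟶ D.S t) * D.mult (D.Δ t) l :=
        Nat.add_le_add_left (ih _ hlt (hL.of_epi (cokernel.π a)) rfl) _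
      _ = (finrank k (cokernel a ⟶ D.S t) + 1) * D.mult (D.Δ t) l := by ring
      _ ≤ N * D.mult (D.Δ t) l := Nat.mul_le_mul_right _ hlt

lemma IsLayer.length_le {t : Fin n} {L : C} (hL : D.IsLayer t L) :
    D.length L ≤ finrank k (L ⟶ D.S t) * D.length (D.Δ t) := by
  rw [length, length, Finset.mul_sum]
  exact Finset.sum_le_sum fun l _ => hL.mult_le l

lemma exists_section_of_iso_biproduct {t : Fin n} {X Y : C} (π : Y ⟶ X) [Epi π]
    (hY : D.FactorsBelow (t + 1) Y) {T : ℕ} (e : X ≅ ⨁ fun _ : Fin T => D.Δ t) :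
    ∃ σ : X ⟶ Y, σ ≫ π = 𝟙 X := by
  choose b hb using fun j => D.exists_lift_Δ π hY (biproduct.ι (fun _ : Fin T => D.Δ t) j ≫ e.inv)
  have : biproduct.desc b ≫ π = e.inv := biproduct.hom_ext' _ _ fun j => by simp [hb]
  exact ⟨e.hom ≫ biproduct.desc b, by rw [Category.assoc, this, e.hom_inv_id]⟩

/-- Equality in `IsLayer.length_le` forces every peeled-off copy of `Δ t` to embed, and
relative projectivity of `Δ t` splits the resulting extensions. -/
lemma IsLayer.nonempty_iso_biproduct {t : Fin n} {L : C} (hL : D.IsLayer t L) {T : ℕ}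
    (hT : finrank k (L ⟶ D.S t) = T) (hlen : D.length L = T * D.length (D.Δ t)) :
    Nonempty (L ≅ ⨁ fun _ : Fin T => D.Δ t) := by
  induction T generalizing L with
  | zero =>
    have h0 := D.isZero_of_length_eq_zero (by simpa using hlen)
    exact ⟨h0.iso (isZero_biproduct_fin_zero _)⟩
  | succ T ih =>
    have hΔ := D.length_pos (D.Δ_not_isZero t)
    have h0 : ¬ IsZero L := fun h => by
      rw [D.length_eq_zero_of_isZero h] at hlen
      exact (Nat.mul_pos T.succ_pos hΔ).ne hlen
    obtain ⟨a, π, ha⟩ := hL.exists_Δ_comp_ne_zero h0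
    have hL' := hL.of_epi (cokernel.π a)
    have := D.homFinite L (D.S t)
    have hlt := hT ▸ finrank_hom_cokernel_lt k ha
    have hcok := hL'.length_le
    have himage : D.length (image a) ≤ D.length (D.Δ t) := D.length_le_of_epi (factorThruImage a)
    have hsum : D.length (image a) + D.length (cokernel a) = D.length L :=
      D.length_add_of_mult fun l => by
        rw [← D.mult_eq_of_iso (cokernelImageι a), D.mult_add_of_mono]
    have h1 : finrank k (cokernel a ⟶ D.S t) * D.length (D.Δ t) ≤ T * D.length (D.Δ t) :=
      Nat.mul_le_mul_right _ (by omega)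
    have h2 : (T + 1) * D.length (D.Δ t) = T * D.length (D.Δ t) + D.length (D.Δ t) := by ring
    have hfr : finrank k (cokernel a ⟶ D.S t) = T := Nat.eq_of_mul_eq_mul_right hΔ (by omega)
    have : IsIso (factorThruImage a) := D.isIso_of_epi_of_length_le _ (by omega)
    have : Mono a := by rw [← image.fac a]; infer_instance
    obtain ⟨e⟩ := ih hL' hfr (by omega)
    obtain ⟨σ, hσ⟩ := exists_section_of_iso_biproduct (cokernel.π a) hL.1 e
    let s := ShortComplex.Splitting.ofExactOfSection _ (shortExact_cokernel a).exact σ hσ ‹_›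
    exact ⟨s.isoBinaryBiproduct ≪≫ biprod.mapIso (Iso.refl _) e ≪≫
      biprodBiproductFinSuccIso _ T⟩

end Layer

open ZeroObject in
lemma exists_epi_length_max (X : C) (c : ℕ) :
    ∃ (Q : C) (e : X ⟶ Q), Epi e ∧ D.FactorsBelow c Q ∧
      ∀ ⦃W : C⦄ (e' : X ⟶ W), Epi e' → D.FactorsBelow c W → D.length W ≤ D.length Q := by
  classical
  let good : ℕ → Prop := fun d =>
    ∃ (W : C) (e' : X ⟶ W), Epi e' ∧ D.FactorsBelow c W ∧ D.length W = d
  have hbd : ∀ d, good d → d ≤ D.length X := by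
    rintro _ ⟨W, e', _, -, rfl⟩
    exact D.length_le_of_epi e'
  have h0 : good 0 := ⟨0, 0, (isZero_zero C).epi _,
    fun l _ => D.mult_eq_zero_of_isZero (isZero_zero C) l,
    D.length_eq_zero_of_isZero (isZero_zero C)⟩
  obtain ⟨Q, e, he, hQ, hlen⟩ := Nat.findGreatest_spec (P := good) (Nat.zero_le _) h0
  refine ⟨Q, e, he, hQ, fun W e' he' hW => ?_⟩
  rw [hlen]
  exact Nat.le_findGreatest (hbd _ ⟨W, e', he', hW, rfl⟩) ⟨W, e', he', hW, rfl⟩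

/-- The image of `X ⟶ Q ⊞ W` is again a quotient of `X` in the class, and its projection onto
`Q` is an epimorphism that by maximality cannot lose length. -/
lemma isMaxQuotientIn_of_length_max {c : ℕ} {X Q : C} (e : X ⟶ Q) [Epi e]
    (hQ : D.FactorsBelow c Q)
    (hmax : ∀ ⦃W : C⦄ (e' : X ⟶ W), Epi e' → D.FactorsBelow c W → D.length W ≤ D.length Q) :
    IsMaxQuotientIn (D.FactorsBelow c) X Q e := by
  refine ⟨‹_›, hQ, fun W e' he' hW => ?_⟩
  obtain ⟨φ, hφ⟩ : ∃ φ, φ = biprod.lift e e' := ⟨_, rfl⟩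
  have hfac : factorThruImage φ ≫ image.ι φ ≫ biprod.fst = e := by simp [hφ]
  have : Epi (factorThruImage φ ≫ image.ι φ ≫ biprod.fst) := hfac ▸ inferInstance
  have : Epi (image.ι φ ≫ biprod.fst) := epi_of_epi (factorThruImage φ) _
  have : IsIso (image.ι φ ≫ biprod.fst) := D.isIso_of_epi_of_length_le _
    (hmax (factorThruImage φ) inferInstance ((hQ.biprod hW).of_mono (image.ι φ)))
  refine ⟨inv (image.ι φ ≫ biprod.fst) ≫ image.ι φ ≫ biprod.snd, ?_⟩
  rw [← Category.assoc, (IsIso.comp_inv_eq _).2 hfac.symm, image.fac_assoc, hφ, biprod.lift_snd]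

lemma length_le_of_isMaxQuotientIn {mem : C → Prop} {X Q W : C} {e : X ⟶ Q}
    (h : IsMaxQuotientIn mem X Q e) (e' : X ⟶ W) [Epi e'] (hW : mem W) :
    D.length W ≤ D.length Q := by
  obtain ⟨r, hr⟩ := h.2.2 e' inferInstance hW
  have : Epi (e ≫ r) := hr ▸ inferInstance
  have : Epi r := epi_of_epi e r
  exact D.length_le_of_epi r

structure QuotientTower (X : C) where
  Q : ℕ → C
  e : ∀ c, X ⟶ Q c
  r : ∀ c, Q (c + 1) ⟶ Q c
  isMax : ∀ c, IsMaxQuotientIn (D.FactorsBelow c) X (Q c) (e c)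
  comm : ∀ c, e (c + 1) ≫ r c = e c

lemma nonempty_quotientTower (X : C) : Nonempty (D.QuotientTower X) := by
  choose Q e he hQ hmax using D.exists_epi_length_max X
  have hmax' := fun c => D.isMaxQuotientIn_of_length_max (e c) (hQ c) (hmax c)
  choose r hr using fun c => (hmax' (c + 1)).2.2 (e c) (he c) ((hQ c).mono c.le_succ)
  exact ⟨⟨Q, e, r, hmax', hr⟩⟩

namespace QuotientTower

section

variable {D} {X : C} (τ : D.QuotientTower X)

noncomputable abbrev layer (c : ℕ) : C := kernel (τ.r c)

lemma epi_e (c : ℕ) : Epi (τ.e c) := (τ.isMax c).1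

lemma epi_r (c : ℕ) : Epi (τ.r c) :=
  have : Epi (τ.e (c + 1) ≫ τ.r c) := τ.comm c ▸ τ.epi_e c
  epi_of_epi (τ.e (c + 1)) _

lemma isZero_Q_zero : IsZero (τ.Q 0) := (τ.isMax 0).2.1.isZero

lemma isIso_e {c : ℕ} (hc : n ≤ c) : IsIso (τ.e c) :=
  have := τ.epi_e c
  D.isIso_of_epi_of_length_le _
    (D.length_le_of_isMaxQuotientIn (τ.isMax c) (𝟙 X) (D.factorsBelow_of_le hc X))

lemma mult_layer_add (c : ℕ) (l : Fin n) :
    D.mult (τ.layer c) l + D.mult (τ.Q c) l = D.mult (τ.Q (c + 1)) l :=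
  have := τ.epi_r c
  D.mult_add_of_epi (τ.r c) l

/-- A quotient `W` of the layer `c` in `A_{c-1}` would enlarge `Q c` to a quotient of `X` of
length `length (Q c) + length W`, still with composition factors below `c`. -/
lemma isLayer_layer {c : ℕ} (hc : c < n) : D.IsLayer ⟨c, hc⟩ (τ.layer c) := by
  refine ⟨(τ.isMax (c + 1)).2.1.of_mono (kernel.ι (τ.r c)), fun W ρ hρ hW => ?_⟩
  have := τ.epi_e (c + 1)
  let κ := kernel.ι ρ ≫ kernel.ι (τ.r c)
  have hV : ∀ l, D.mult (τ.Q c) l + D.mult W l = D.mult (cokernel κ) l := fun l => by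
    have := D.mult_add_of_mono κ l
    have := D.mult_add_of_epi ρ l
    have := τ.mult_layer_add c l
    omega
  have hVc : D.FactorsBelow c (cokernel κ) := fun l hl => by
    rw [← hV, (τ.isMax c).2.1 l hl, hW l hl]
  have hle := D.length_le_of_isMaxQuotientIn (τ.isMax c) (τ.e (c + 1) ≫ cokernel.π κ) hVc
  have := D.length_add_of_mult hV
  exact D.isZero_of_length_eq_zero (by omega)

lemma mult_Q_eq_sum (c : ℕ) (l : Fin n) :
    D.mult (τ.Q c) l = ∑ j ∈ Finset.range c, D.mult (τ.layer j) l := by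
  induction c with
  | zero => exact D.mult_eq_zero_of_isZero τ.isZero_Q_zero l
  | succ c ih => rw [Finset.sum_range_succ, ← ih, ← τ.mult_layer_add c l, add_comm]

lemma mult_eq_sum_layer (l : Fin n) : D.mult X l = ∑ t : Fin n, D.mult (τ.layer t) l := by
  have := τ.isIso_e le_rfl
  rw [Fin.sum_univ_eq_sum_range (fun j => D.mult (τ.layer j) l), ← τ.mult_Q_eq_sum n,
    D.mult_eq_of_iso (asIso (τ.e n))]

lemma exists_mono_cokernel_iso_layer (c : ℕ) : ∃ u : kernel (τ.e (c + 1)) ⟶ kernel (τ.e c),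
    Mono u ∧ Nonempty (cokernel u ≅ τ.layer c) := by
  have := τ.epi_e (c + 1)
  have hS := shortExact_kernel_comp (τ.e (c + 1)) (τ.r c)
  have := hS.mono_f
  exact ⟨_ ≫ (kernelIsoOfEq (τ.comm c)).hom, inferInstance,
    ⟨cokernelCompIsIso _ _ ≪≫ (cokernelIsCokernel _).coconePointUniqueUpToIso hS.gIsCokernel⟩⟩

lemma exists_filtration : ∃ (F : Fin (n + 1) → C) (f : ∀ l : Fin n, F l.castSucc ⟶ F l.succ),
    IsZero (F 0) ∧ Nonempty (F (Fin.last n) ≅ X) ∧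
      ∀ l : Fin n, Mono (f l) ∧ ∃ t : Fin n, Nonempty (cokernel (f l) ≅ τ.layer t) := by
  choose u hu hcok using τ.exists_mono_cokernel_iso_layer
  obtain ⟨F, f, hF0, hFlast, hf⟩ := exists_filtration_of_chain (K := fun c => kernel (τ.e c)) u hu n
  have := τ.isIso_e le_rfl
  refine ⟨F, f, hF0 ▸ isZero_kernel_of_mono _, ⟨eqToIso hFlast ≪≫
    kernelIsoOfEq (τ.isZero_Q_zero.eq_of_tgt _ 0) ≪≫ kernelZeroIsoSource⟩, fun l => ⟨(hf l).1, ?_⟩⟩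
  obtain ⟨t, ⟨e⟩⟩ := (hf l).2
  exact ⟨t, ⟨e ≪≫ (hcok t).some⟩⟩

end

section

variable {D} {i : Fin n} (τ : D.QuotientTower (D.P i))

lemma isZero_Q_of_le {c : ℕ} (hc : c ≤ i) : IsZero (τ.Q c) := by
  by_contra h
  obtain ⟨j, π, hπ⟩ := D.exists_epi_S h
  have := τ.epi_e c
  obtain rfl := D.eq_of_hom_P_ne_zero (τ.e c ≫ π) fun h0 =>
    D.S_not_isZero j (IsZero.of_epi_eq_zero _ h0)
  simpa [D.mult_simple, (τ.isMax c).2.1 j hc] using D.mult_le_of_epi π j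

lemma isZero_layer_of_lt {t : Fin n} (ht : t < i) : IsZero (τ.layer t) :=
  IsZero.of_mono (kernel.ι _) (τ.isZero_Q_of_le ht)

/-- `layer t` embeds in `Q (t + 1) ∈ A_t`, a quotient of `P i`, so relative injectivity of `∇ t`
bounds its head by `dim Hom (P i, ∇ t)`. -/
lemma finrank_hom_layer_le (t : Fin n) :
    finrank k (τ.layer t ⟶ D.S t) ≤ D.mult (D.nabla t) i := by
  obtain ⟨s, hs⟩ := D.exists_mono_S_nabla t
  have := τ.epi_e (t + 1)
  have := D.homFinite (τ.layer t) (D.nabla t)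
  have := D.homFinite (τ.Q (t + 1)) (D.nabla t)
  have := D.homFinite (D.P i) (D.nabla t)
  calc finrank k (τ.layer t ⟶ D.S t) ≤ finrank k (τ.layer t ⟶ D.nabla t) :=
        finrank_hom_le_of_mono k s
    _ ≤ finrank k (τ.Q (t + 1) ⟶ D.nabla t) := finrank_hom_le_of_forall_exists_comp_eq k
        (kernel.ι _) (D.exists_extend_nabla (kernel.ι _) (τ.isMax (t + 1)).2.1)
    _ ≤ finrank k (D.P i ⟶ D.nabla t) := finrank_hom_le_of_epi k (τ.e (t + 1))
    _ = D.mult (D.nabla t) i := D.finrank_hom_P_eq_mult i _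

lemma mult_layer_le (t l : Fin n) :
    D.mult (τ.layer t) l ≤ D.mult (D.nabla t) i * D.mult (D.Δ t) l :=
  ((τ.isLayer_layer t.isLt).mult_le l).trans (Nat.mul_le_mul_right _ (τ.finrank_hom_layer_le t))

lemma length_layer_le (t : Fin n) :
    D.length (τ.layer t) ≤ D.mult (D.nabla t) i * D.length (D.Δ t) :=
  (τ.isLayer_layer t.isLt).length_le.trans (Nat.mul_le_mul_right _ (τ.finrank_hom_layer_le t))

lemma sum_length_layer : ∑ t : Fin n, D.length (τ.layer t) = D.length (D.P i) := by
  simp only [length, τ.mult_eq_sum_layer]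
  exact Finset.sum_comm

lemma exists_iso_biproduct_Δ
    (h : D.length (D.P i) = ∑ j, D.mult (D.nabla j) i * D.length (D.Δ j)) (t : Fin n) :
    ∃ (N : ℕ) (g : Fin N → Fin n), (∀ a, i ≤ g a) ∧
      Nonempty (τ.layer t ≅ ⨁ fun a => D.Δ (g a)) := by
  by_cases hit : i ≤ t
  · have heq := (Finset.sum_eq_sum_iff_of_le fun t _ => τ.length_layer_le t).1
      (τ.sum_length_layer.trans h) t (Finset.mem_univ t)
    have hL : D.IsLayer t (τ.layer t) := τ.isLayer_layer t.isLt
    have := hL.length_le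
    have := Nat.mul_le_mul_right (D.length (D.Δ t)) (τ.finrank_hom_layer_le t)
    obtain ⟨e⟩ := hL.nonempty_iso_biproduct rfl (by omega)
    exact ⟨_, fun _ => t, fun _ => hit, ⟨e⟩⟩
  · exact ⟨0, Fin.elim0, fun a => a.elim0,
      ⟨(τ.isZero_layer_of_lt (not_le.1 hit)).iso (isZero_biproduct_fin_zero _)⟩⟩

end

end QuotientTower

lemma mult_P_le (i l : Fin n) :
    D.mult (D.P i) l ≤ ∑ j, D.mult (D.nabla j) i * D.mult (D.Δ j) l := by
  obtain ⟨τ⟩ := D.nonempty_quotientTower (D.P i)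
  rw [τ.mult_eq_sum_layer]
  exact Finset.sum_le_sum fun t _ => τ.mult_layer_le t l

lemma sum_mul_length_Δ (i : Fin n) : ∑ j, D.mult (D.nabla j) i * D.length (D.Δ j) =
    ∑ l, ∑ j, D.mult (D.nabla j) i * D.mult (D.Δ j) l := by
  simp only [length, Finset.mul_sum]
  exact Finset.sum_comm

lemma length_P_le (i : Fin n) :
    D.length (D.P i) ≤ ∑ j, D.mult (D.nabla j) i * D.length (D.Δ j) := by
  rw [sum_mul_length_Δ]
  exact Finset.sum_le_sum fun l _ => D.mult_P_le i l

lemma length_P_eq_iff (i : Fin n) :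
    D.length (D.P i) = ∑ j, D.mult (D.nabla j) i * D.length (D.Δ j) ↔
      ∀ l, D.mult (D.P i) l = ∑ j, D.mult (D.nabla j) i * D.mult (D.Δ j) l := by
  rw [sum_mul_length_Δ, length, Finset.sum_eq_sum_iff_of_le fun l _ => D.mult_P_le i l]
  simp

lemma exists_filtration_Δ (i : Fin n)
    (h : D.length (D.P i) = ∑ j, D.mult (D.nabla j) i * D.length (D.Δ j)) :
    ∃ (d : ℕ) (F : Fin (d + 1) → C) (f : ∀ l : Fin d, F l.castSucc ⟶ F l.succ),
      IsZero (F 0) ∧ Nonempty (F (Fin.last d) ≅ D.P i) ∧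
      ∀ l : Fin d, Mono (f l) ∧ ∃ (N : ℕ) (g : Fin N → Fin n), (∀ a, i ≤ g a) ∧
        Nonempty (cokernel (f l) ≅ ⨁ (fun a : Fin N => D.Δ (g a))) := by
  obtain ⟨τ⟩ := D.nonempty_quotientTower (D.P i)
  obtain ⟨F, f, hF0, hF, hf⟩ := τ.exists_filtration
  refine ⟨n, F, f, hF0, hF, fun l => ⟨(hf l).1, ?_⟩⟩
  obtain ⟨t, ⟨e⟩⟩ := (hf l).2
  obtain ⟨N, g, hg, ⟨e'⟩⟩ := τ.exists_iso_biproduct_Δ h t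
  exact ⟨N, g, hg, ⟨e ≪≫ e'⟩⟩

noncomputable def multHom (l : Fin n) : K0 C →+ ℤ :=
  QuotientAddGroup.lift _ (FreeAbelianGroup.lift fun X => (D.mult X l : ℤ)) fun _ hx =>
    (AddSubgroup.closure_le (K := (FreeAbelianGroup.lift fun X => (D.mult X l : ℤ)).ker)).2
      (by rintro _ ⟨S, hS, rfl⟩; simp [D.mult_additive S hS l]) hx

lemma multHom_cls (l : Fin n) (X : C) : D.multHom l (K0.cls X) = D.mult X l :=
  (QuotientAddGroup.lift_mk _ _ _).trans (FreeAbelianGroup.lift_apply_of _ _)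

lemma cls_eq_sum (X : C) : K0.cls X = ∑ l, D.mult X l • K0.cls (D.S l) := by
  induction X using D.induction_on with
  | zero X h => simp [K0.cls_eq_zero_of_isZero h, D.mult_eq_zero_of_isZero h]
  | simple i X e => simp [K0.cls_eq_of_iso e.some, D.mult_eq_of_iso e.some, D.mult_simple]
  | ext S hS ih₁ ih₃ =>
    simp [K0.cls_add_of_shortExact hS, ih₁, ih₃, D.mult_additive S hS, add_smul,
      Finset.sum_add_distrib]

lemma cls_eq_sum_smul_iff (X : C) (a : Fin n → ℕ) (Y : Fin n → C) :
    K0.cls X = ∑ j, a j • K0.cls (Y j) ↔ ∀ l, D.mult X l = ∑ j, a j * D.mult (Y j) l := by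
  refine ⟨fun h l => ?_, fun h => ?_⟩
  · have := congrArg (D.multHom l) h
    simp only [D.multHom_cls, map_sum, map_nsmul, nsmul_eq_mul] at this
    exact_mod_cast this
  · simp only [D.cls_eq_sum X, D.cls_eq_sum (Y _), h, Finset.smul_sum, Finset.sum_smul, smul_smul]
    exact Finset.sum_comm

end DeligneData

theorem length_projective_le_general (D : DeligneData k C n) :
    (∀ i, D.length (D.P i) ≤ ∑ j, D.mult (D.nabla j) i * D.length (D.Δ j)) ∧
    ((∀ i, D.length (D.P i) = ∑ j, D.mult (D.nabla j) i * D.length (D.Δ j)) ↔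
      (∀ i, K0.cls (D.P i) =
        ∑ j ∈ Finset.univ.filter (fun j => i ≤ j),
          (D.mult (D.nabla j) i) • K0.cls (D.Δ j))) ∧
    ((∀ i, D.length (D.P i) = ∑ j, D.mult (D.nabla j) i * D.length (D.Δ j)) →
      ∀ i, ∃ (d : ℕ) (F : Fin (d + 1) → C) (f : ∀ l : Fin d, F l.castSucc ⟶ F l.succ),
        IsZero (F 0) ∧ Nonempty (F (Fin.last d) ≅ D.P i) ∧
        ∀ l : Fin d, Mono (f l) ∧ ∃ (N : ℕ) (g : Fin N → Fin n), (∀ a, i ≤ g a) ∧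
          Nonempty (cokernel (f l) ≅ ⨁ (fun a : Fin N => D.Δ (g a)))) := by
  have hfilter : ∀ i, ∑ j ∈ Finset.univ.filter (fun j => i ≤ j),
      D.mult (D.nabla j) i • K0.cls (D.Δ j) = ∑ j, D.mult (D.nabla j) i • K0.cls (D.Δ j) :=
    fun i => Finset.sum_filter_of_ne fun j _ hj => not_lt.1 fun hji => hj <| by
      rw [D.mult_nabla_eq_zero hji, zero_smul]
  refine ⟨D.length_P_le, forall_congr' fun i => ?_, fun h i => D.exists_filtration_Δ i (h i)⟩
  rw [hfilter, D.cls_eq_sum_smul_iff, D.length_P_eq_iff]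

/-- **Lemma** (maximal length of projective covers). Suppose `[Δ j : S j] = 1` for all `j`.
Then `length (P i) ≤ ∑_j [∇ j : S i] · length (Δ j)` for every `i`; equality holds for all
`i` if and only if `[P i] = ∑_{j ≥ i} [∇ j : S i] · [Δ j]` in `K(A)` for all `i`; and in the
case of equality each `P i` admits a filtration whose factors are direct sums of the
standard objects `Δ j`, `j ≥ i`. -/
theorem length_projective_le (D : DeligneData k C n)
    (hΔ : ∀ j, D.mult (D.Δ j) j = 1) :
    (∀ i, D.length (D.P i) ≤ ∑ j, D.mult (D.nabla j) i * D.length (D.Δ j)) ∧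
    ((∀ i, D.length (D.P i) = ∑ j, D.mult (D.nabla j) i * D.length (D.Δ j)) ↔
      (∀ i, K0.cls (D.P i) =
        ∑ j ∈ Finset.univ.filter (fun j => i ≤ j),
          (D.mult (D.nabla j) i) • K0.cls (D.Δ j))) ∧
    ((∀ i, D.length (D.P i) = ∑ j, D.mult (D.nabla j) i * D.length (D.Δ j)) →
      ∀ i, ∃ (d : ℕ) (F : Fin (d + 1) → C) (f : ∀ l : Fin d, F l.castSucc ⟶ F l.succ),
        IsZero (F 0) ∧ Nonempty (F (Fin.last d) ≅ D.P i) ∧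
        ∀ l : Fin d, Mono (f l) ∧ ∃ (N : ℕ) (g : Fin N → Fin n), (∀ a, i ≤ g a) ∧
          Nonempty (cokernel (f l) ≅ ⨁ (fun a : Fin N => D.Δ (g a)))) :=
  length_projective_le_general D

end HWPaper
end

section
/- Let Q be a finite quiver without loops with vertices 1,…,n, and let I ⊂ kQ be an admissible ideal generated by paths with canonical generating set G of minimal-length paths in I. Suppose every maximal vertex of each path in G is external. Then: (a) for each vertex i, the only path from i to i in the subquiver Q_{≤i} not lying in I is the trivial path (i.e. π^i_{ii} = 1); (b) every path not lying in I has a unique maximal vertex; and (c) the concatenation of two paths not lying in I at their common maximal vertex does not lie in I. -/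
open CategoryTheory

universe u

namespace HWPaper

/-- A finite quiver without loops on the ordered vertex set `Fin n`. -/
structure FinQuiver (n : ℕ) where
  /-- the arrows from `i` to `j` -/
  Arr : Fin n → Fin n → Type
  finite : ∀ i j, Finite (Arr i j)
  noLoops : ∀ i, IsEmpty (Arr i i)

variable {n : ℕ}

/-- The vertex set of a finite quiver, as a quiver. -/
def QVert (_ : FinQuiver n) : Type := Fin n

instance (Q : FinQuiver n) : Quiver (QVert Q) := ⟨fun i j => Q.Arr i j⟩

instance (Q : FinQuiver n) : LinearOrder (QVert Q) :=
  inferInstanceAs (LinearOrder (Fin n))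

instance (Q : FinQuiver n) : Fintype (QVert Q) :=
  inferInstanceAs (Fintype (Fin n))

/-- The list of vertices visited by a path (including its endpoints, with multiplicity). -/
def pathVerts {Q : FinQuiver n} {i : QVert Q} :
    ∀ {j : QVert Q}, Quiver.Path i j → List (QVert Q)
  | _, Quiver.Path.nil => [i]
  | j, Quiver.Path.cons p _ => pathVerts p ++ [j]

/-- The internal vertices of a path: all visited vertices except the two endpoints. -/
def internalVerts {Q : FinQuiver n} {i j : QVert Q} (p : Quiver.Path i j) :
    List (QVert Q) :=
  ((pathVerts p).drop 1).dropLast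

/-- `Idl` is (the set of paths spanning) a two-sided ideal of the path algebra generated
by paths: a set of paths closed under pre- and post-composition with arbitrary paths. -/
def IsPathIdeal (Q : FinQuiver n) (Idl : ∀ ⦃i j : QVert Q⦄, Quiver.Path i j → Prop) : Prop :=
  ∀ ⦃i j a b : QVert Q⦄ (u : Quiver.Path a i) (p : Quiver.Path i j) (v : Quiver.Path j b),
    Idl p → Idl ((u.comp p).comp v)

/-- The ideal `Idl` is admissible: it contains all sufficiently long paths and consists of
paths of length at least two. -/
def IsAdmissible (Q : FinQuiver n) (Idl : ∀ ⦃i j : QVert Q⦄, Quiver.Path i j → Prop) : Prop :=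
  (∃ N : ℕ, ∀ ⦃i j : QVert Q⦄ (p : Quiver.Path i j), N ≤ p.length → Idl p) ∧
  (∀ ⦃i j : QVert Q⦄ (p : Quiver.Path i j), Idl p → 2 ≤ p.length)

/-- `p` belongs to the canonical generating set `G` of the monomial ideal `Idl`:
`p` lies in `Idl` and is of minimal length, i.e. no proper factor of `p` lies in `Idl`. -/
def IsMinimalRel {Q : FinQuiver n} (Idl : ∀ ⦃i j : QVert Q⦄, Quiver.Path i j → Prop)
    {i j : QVert Q} (p : Quiver.Path i j) : Prop :=
  Idl p ∧ ∀ ⦃a b : QVert Q⦄ (u : Quiver.Path i a) (g : Quiver.Path a b)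
    (v : Quiver.Path b j), p = (u.comp g).comp v → Idl g →
      u.length = 0 ∧ v.length = 0

/-- `π^k_{i j}`: the number of paths from `i` to `j` in the full subquiver `Q_{≤ k}`
which do not lie in the ideal. -/
noncomputable def pathCountLe (Q : FinQuiver n)
    (Idl : ∀ ⦃i j : QVert Q⦄, Quiver.Path i j → Prop) (k i j : QVert Q) : ℕ :=
  Nat.card {p : Quiver.Path i j // (∀ v ∈ pathVerts p, v ≤ k) ∧ ¬ Idl p}

/-- `π^n_{i j}`: the number of paths from `i` to `j` in `Q` which do not lie in the ideal. -/
noncomputable def pathCount (Q : FinQuiver n)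
    (Idl : ∀ ⦃i j : QVert Q⦄, Quiver.Path i j → Prop) (i j : QVert Q) : ℕ :=
  Nat.card {p : Quiver.Path i j // ¬ Idl p}

/-- Green–Schroll's criterion: all maximal vertices of every path in the canonical
generating set `G` are external, i.e. no internal vertex of a minimal relation is
maximal among the vertices of that relation. -/
def GreenSchrollCondition (Q : FinQuiver n)
    (Idl : ∀ ⦃i j : QVert Q⦄, Quiver.Path i j → Prop) : Prop :=
  ∀ ⦃i j : QVert Q⦄ (p : Quiver.Path i j), IsMinimalRel Idl p →
    ∀ v ∈ internalVerts p, ∃ w ∈ pathVerts p, v < w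

/-- The numerical path-count criterion: `π^i_{i i} = 1` for each vertex `i`, and
`π^n_{i k} = ∑_j π^j_{i j} · π^j_{j k}` for all vertices `i, k`. -/
def PathCountCondition (Q : FinQuiver n)
    (Idl : ∀ ⦃i j : QVert Q⦄, Quiver.Path i j → Prop) : Prop :=
  (∀ i : QVert Q, pathCountLe Q Idl i i i = 1) ∧
  (∀ i k : QVert Q, pathCount Q Idl i k =
    ∑ j : QVert Q, pathCountLe Q Idl j i j * pathCountLe Q Idl j j k)

end HWPaper

/-!
The heart of the matter is (c), in the form: if `p.comp q` lies in the ideal and the junction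
vertex `v` is maximal on both `p` and `q`, then `p` or `q` lies in the ideal. Indeed, a minimal
relation dividing `p.comp q` either divides one of the two factors, or passes through `v` as an
internal vertex; but `v` is then maximal on that relation, which the Green–Schroll condition
forbids.

For (a), applying this to the powers of a nontrivial cycle at `i` inside `Q_{≤ i}` which is not
in the ideal produces arbitrarily long paths outside the ideal, contradicting admissibility.
For (b), a maximal vertex visited twice by a path cuts out such a cycle.
-/

namespace Quiver.Path

variable {V : Type*} [Quiver V]

theorem mem_vertices_comp {a b c x : V} {p : Path a b} {q : Path b c} :
    x ∈ (p.comp q).vertices ↔ x ∈ p.vertices ∨ x ∈ q.vertices := by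
  conv_rhs => rw [← p.dropLast_append_end_eq]
  simp only [vertices_comp, List.mem_append, List.mem_singleton]
  constructor
  · tauto
  · rintro ((h | rfl) | h)
    · exact .inl h
    · exact .inr q.start_mem_vertices
    · exact .inr h

theorem exists_eq_comp_of_comp_eq_comp {a b c d : V} {p : Path a b} {r : Path a c}
    {s : Path c d} : ∀ {q : Path b d}, p.comp q = r.comp s → q.length ≤ s.length →
      ∃ t : Path c b, p = r.comp t ∧ s = t.comp q
  | .nil, h, _ => ⟨s, by simpa using h, rfl⟩
  | .cons q e, h, hle => by
    cases s with
    | nil => simp at hle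
    | cons s e' =>
      obtain rfl := obj_eq_of_cons_eq_cons h
      obtain rfl := eq_of_heq (hom_heq_of_cons_eq_cons h)
      obtain ⟨t, rfl, rfl⟩ := exists_eq_comp_of_comp_eq_comp
        (eq_of_heq (heq_of_cons_eq_cons h)) (by simpa using hle)
      exact ⟨t, rfl, rfl⟩

theorem comp_eq_comp_comp_trichotomy {a x y v b : V} {u : Path a x} {g : Path x y}
    {w : Path y b} {p : Path a v} {q : Path v b} (h : p.comp q = (u.comp g).comp w) :
    (∃ t : Path y v, p = (u.comp g).comp t) ∨ (∃ t : Path v x, q = (t.comp g).comp w) ∨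
      ∃ (g₁ : Path x v) (g₂ : Path v y), g = g₁.comp g₂ ∧ 0 < g₁.length ∧ 0 < g₂.length := by
  rcases le_or_gt q.length w.length with hqw | hwq
  · obtain ⟨t, hp, -⟩ := exists_eq_comp_of_comp_eq_comp h hqw
    exact .inl ⟨t, hp⟩
  rcases le_or_gt (g.comp w).length q.length with hgq | hqg
  · rw [comp_assoc] at h
    obtain ⟨t, -, hq⟩ := exists_eq_comp_of_comp_eq_comp h.symm hgq
    exact .inr (.inl ⟨t, by rw [hq, comp_assoc]⟩)
  · obtain ⟨g₂, hg, rfl⟩ := exists_eq_comp_of_comp_eq_comp h.symm hwq.le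
    simp only [length_comp] at hwq hqg
    obtain ⟨g₁, -, rfl⟩ := exists_eq_comp_of_comp_eq_comp hg.symm (by omega)
    simp only [length_comp] at hqg
    exact .inr (.inr ⟨g₁, g₂, rfl, by omega, by omega⟩)

theorem exists_cycle_of_two_le_count [DecidableEq V] {a v : V} :
    ∀ {b : V} (p : Path a b), 2 ≤ p.vertices.count v →
      ∃ (p₁ : Path a v) (c : Path v v) (p₂ : Path v b), p = (p₁.comp c).comp p₂ ∧ 0 < c.length
  | _, .nil, h => by simp [List.count_singleton] at h; split at h <;> omega
  | b, .cons p e, h => by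
    rw [vertices_cons, List.concat_eq_append, List.count_append, List.count_singleton] at h
    by_cases hp : 2 ≤ p.vertices.count v
    · obtain ⟨p₁, c, p₂, rfl, hc⟩ := exists_cycle_of_two_le_count p hp
      exact ⟨p₁, c, p₂.cons e, rfl, hc⟩
    · obtain rfl : b = v := by by_contra hb; simp [hb] at h; omega
      simp only [beq_self_eq_true, if_true] at h
      obtain ⟨p₁, c, rfl⟩ := p.exists_eq_comp_of_mem_vertices (v := b)
        (List.count_pos_iff.mp (by omega))
      exact ⟨p₁, c.cons e, .nil, rfl, by simp⟩

end Quiver.Path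

namespace HWPaper

open Quiver Path

variable {Q : FinQuiver n} {Idl : ∀ ⦃i j : QVert Q⦄, Path i j → Prop}

theorem pathVerts_eq_vertices {i j : QVert Q} (p : Path i j) : pathVerts p = p.vertices := by
  induction p with
  | nil => rfl
  | cons p e ih => simp [pathVerts, ih]

theorem mem_pathVerts_comp {i j k v : QVert Q} {p : Path i j} {q : Path j k} :
    v ∈ pathVerts (p.comp q) ↔ v ∈ pathVerts p ∨ v ∈ pathVerts q := by
  simp only [pathVerts_eq_vertices, mem_vertices_comp]

theorem mem_internalVerts_comp {i v j : QVert Q} (p : Path i v) (q : Path v j)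
    (hp : 0 < p.length) (hq : 0 < q.length) : v ∈ internalVerts (p.comp q) := by
  cases q with
  | nil => simp at hq
  | cons q e =>
    have hne : p.vertices.dropLast ≠ [] := by
      simpa [← List.length_pos_iff] using hp
    rw [internalVerts, pathVerts_eq_vertices, vertices_comp,
      List.drop_append_of_le_length (List.length_pos_iff.mpr hne),
      List.dropLast_append_of_ne_nil (vertices_ne_nil _)]
    simp [start_mem_vertices]

theorem exists_isMinimalRel_factor {i j : QVert Q} {p : Path i j} (hp : Idl p) :
    ∃ (a b : QVert Q) (u : Path i a) (g : Path a b) (w : Path b j),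
      p = (u.comp g).comp w ∧ IsMinimalRel Idl g := by
  classical
  have hex : ∃ ℓ, ∃ (a b : QVert Q) (u : Path i a) (g : Path a b) (w : Path b j),
      p = (u.comp g).comp w ∧ Idl g ∧ g.length = ℓ :=
    ⟨p.length, i, j, .nil, p, .nil, by simp, hp, rfl⟩
  obtain ⟨a, b, u, g, w, rfl, hg, hlen⟩ := Nat.find_spec hex
  refine ⟨a, b, u, g, w, rfl, hg, fun a' b' u' g' w' hsplit hg' => ?_⟩
  have hmin : Nat.find hex ≤ g'.length :=
    Nat.find_min' hex ⟨_, _, u.comp u', g', w'.comp w, by simp [hsplit, comp_assoc], hg', rfl⟩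
  have : g.length = u'.length + g'.length + w'.length := by simp [hsplit, Nat.add_assoc]
  omega

theorem IsAdmissible.not_nil (hadm : IsAdmissible Q Idl) (i : QVert Q) :
    ¬ Idl (Path.nil : Path i i) :=
  fun h => by simpa using hadm.2 _ h

namespace GreenSchrollCondition

variable (hGS : GreenSchrollCondition Q Idl)
include hGS

theorem idl_or_idl_of_comp (hIdl : IsPathIdeal Q Idl) {i v j : QVert Q} {p : Path i v}
    {q : Path v j} (hp : ∀ w ∈ pathVerts p, w ≤ v) (hq : ∀ w ∈ pathVerts q, w ≤ v)
    (h : Idl (p.comp q)) : Idl p ∨ Idl q := by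
  obtain ⟨a, b, u, g, w, hfac, hg⟩ := exists_isMinimalRel_factor h
  rcases comp_eq_comp_comp_trichotomy hfac with ⟨t, rfl⟩ | ⟨t, rfl⟩ | ⟨g₁, g₂, rfl, h₁, h₂⟩
  · exact .inl (hIdl u g t hg.1)
  · exact .inr (hIdl t g w hg.1)
  · obtain ⟨m, hm, hvm⟩ := hGS _ hg v (mem_internalVerts_comp g₁ g₂ h₁ h₂)
    have hm' : m ∈ pathVerts (p.comp q) := by
      rw [hfac, mem_pathVerts_comp, mem_pathVerts_comp]
      exact .inl (.inr hm)
    rcases mem_pathVerts_comp.mp hm' with hm' | hm'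
    · exact absurd (hp m hm') hvm.not_ge
    · exact absurd (hq m hm') hvm.not_ge

theorem idl_of_cycle (hIdl : IsPathIdeal Q Idl) (hadm : IsAdmissible Q Idl) {i : QVert Q}
    (c : Path i i) (hc : ∀ w ∈ pathVerts c, w ≤ i) (hlen : 0 < c.length) : Idl c := by
  by_contra hnc
  have long : ∀ m, ∃ p : Path i i, m ≤ p.length ∧ (∀ w ∈ pathVerts p, w ≤ i) ∧ ¬ Idl p := by
    intro m
    induction m with
    | zero => exact ⟨.nil, le_rfl, by simp [pathVerts], hadm.not_nil i⟩
    | succ m ih =>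
      obtain ⟨p, hm, hp, hnp⟩ := ih
      refine ⟨p.comp c, by rw [length_comp]; omega, ?_, ?_⟩
      · intro w hw
        exact (mem_pathVerts_comp.mp hw).elim (hp w) (hc w)
      · exact fun h => (hGS.idl_or_idl_of_comp hIdl hp hc h).elim hnp hnc
  obtain ⟨N, hN⟩ := hadm.1
  obtain ⟨p, hNp, -, hnp⟩ := long N
  exact hnp (hN p hNp)

theorem pathCountLe_self (hIdl : IsPathIdeal Q Idl) (hadm : IsAdmissible Q Idl) (i : QVert Q) :
    pathCountLe Q Idl i i i = 1 := by
  refine Nat.card_eq_one_iff_exists.mpr ⟨⟨.nil, by simp [pathVerts], hadm.not_nil i⟩, ?_⟩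
  rintro ⟨p, hp, hnp⟩
  have hlen : p.length = 0 :=
    Nat.eq_zero_of_not_pos fun hlen => hnp (hGS.idl_of_cycle hIdl hadm p hp hlen)
  exact Subtype.ext (Path.eq_nil_of_length_zero p hlen)

theorem count_pathVerts_eq_one (hIdl : IsPathIdeal Q Idl) (hadm : IsAdmissible Q Idl)
    {i j v : QVert Q} {p : Path i j} (hnp : ¬ Idl p) (hv : v ∈ pathVerts p)
    (hmax : ∀ w ∈ pathVerts p, w ≤ v) : (pathVerts p).count v = 1 := by
  have hpos : 0 < (pathVerts p).count v := List.count_pos_iff.mpr hv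
  suffices ¬ 2 ≤ (pathVerts p).count v by omega
  intro h2
  rw [pathVerts_eq_vertices] at h2
  obtain ⟨p₁, c, p₂, rfl, hc⟩ := exists_cycle_of_two_le_count p h2
  have hcv : ∀ w ∈ pathVerts c, w ≤ v := fun w hw =>
    hmax w (mem_pathVerts_comp.mpr (.inl (mem_pathVerts_comp.mpr (.inr hw))))
  exact hnp (hIdl p₁ c p₂ (hGS.idl_of_cycle hIdl hadm c hcv hc))

end GreenSchrollCondition

/-- **Lemma.** Suppose every maximal vertex of each path in the canonical generating set
`G` of the admissible monomial ideal `Idl` is external. Then: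
(a) for each vertex `i`, the only path from `i` to `i` in `Q_{≤ i}` not lying in the ideal
is the trivial path, i.e. `π^i_{ii} = 1`;
(b) every path not lying in the ideal has a unique maximal vertex; and
(c) the concatenation of two paths not lying in the ideal at their common maximal vertex
does not lie in the ideal. -/
theorem greenSchroll_consequences (Q : FinQuiver n)
    (Idl : ∀ ⦃i j : QVert Q⦄, Quiver.Path i j → Prop)
    (hIdl : IsPathIdeal Q Idl) (hadm : IsAdmissible Q Idl)
    (hGS : GreenSchrollCondition Q Idl) :
    (∀ (i : QVert Q) (p : Quiver.Path i i),
        (∀ v ∈ pathVerts p, v ≤ i) → ¬ Idl p → p.length = 0) ∧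
    (∀ i : QVert Q, pathCountLe Q Idl i i i = 1) ∧
    (∀ ⦃i j : QVert Q⦄ (p : Quiver.Path i j), ¬ Idl p →
      ∃ v : QVert Q, ((v ∈ pathVerts p ∧ ∀ w ∈ pathVerts p, w ≤ v) ∧
        (pathVerts p).count v = 1)) ∧
    (∀ ⦃i v j : QVert Q⦄ (p : Quiver.Path i v) (q : Quiver.Path v j),
      ¬ Idl p → ¬ Idl q →
      (∀ w ∈ pathVerts p, w ≤ v) → (∀ w ∈ pathVerts q, w ≤ v) →
      ¬ Idl (p.comp q)) := by
  refine ⟨fun i p hp hnp => ?_, hGS.pathCountLe_self hIdl hadm, fun i j p hnp => ?_,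
    fun i v j p q hnp hnq hp hq h => (hGS.idl_or_idl_of_comp hIdl hp hq h).elim hnp hnq⟩
  · exact Nat.eq_zero_of_not_pos fun hlen => hnp (hGS.idl_of_cycle hIdl hadm p hp hlen)
  · obtain ⟨v, hv, hmax⟩ := (pathVerts p).toFinset.exists_max_image id
      ⟨i, by simp [pathVerts_eq_vertices, start_mem_vertices]⟩
    simp only [List.mem_toFinset, id] at hv hmax
    exact ⟨v, ⟨hv, hmax⟩, hGS.count_pathVerts_eq_one hIdl hadm hnp hv hmax⟩

end HWPaper
end
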